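/- arXiv:1612.04437 — 4 statements merged into one kernel-verified Lean document; each statement's English description precedes it below -/
import Mathlib

section
/- Let g be a nondegenerate symmetric bilinear form of Lorentzian signature (-,+,+,+) on ℝ⁴. If w : ℝ⁴ × ℝ⁴ → ℝ is a bilinear form such that w(ξ, ξ) = 0 for every ξ ∈ ℝ⁴ with g(ξ, ξ) = 0, then there exists a constant c ∈ ℝ and an antisymmetric bilinear form A (i.e. A(ξ, η) = -A(η, ξ)) such that w(ξ, η) = c·g(ξ, η) + A(ξ, η) for all ξ, η ∈ ℝ⁴. -/
/-!
Replace `W` by its symmetric part `W + Wᵀ` and pass to coordinates in which `g` is the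
Minkowski form `η`. A symmetric form `S` whose quadratic form vanishes on the light cone of `η`
is a multiple of `η`: the null vectors `e₀ ± eₖ` force `S₀ₖ = 0` and `Sₖₖ = -S₀₀`, and the null
vector `5e₀ + 3eⱼ + 4eₖ` then forces `Sⱼₖ = 0`. Hence `W + Wᵀ = c g`, and `W - (c/2) g` is
antisymmetric.
-/

open Matrix

/-- The Minkowski matrix diag(-1,1,1,1). -/
noncomputable def minkMat : Matrix (Fin 4) (Fin 4) ℝ :=
  Matrix.diagonal (fun i => if i = 0 then (-1 : ℝ) else 1)

namespace Matrix

variable {ι R : Type*} [CommRing R]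

theorem transpose_sub_half_smul_eq_neg {W G : Matrix ι ι ℝ} {c : ℝ} (hG : G.IsSymm)
    (h : W + Wᵀ = c • G) : (W - (c / 2) • G)ᵀ = -(W - (c / 2) • G) := by
  rw [transpose_sub, transpose_smul, hG.eq, eq_sub_of_add_eq' h]
  module

variable [Fintype ι]

theorem transpose_mul_mul_add_transpose (M P : Matrix ι ι R) :
    Pᵀ * M * P + (Pᵀ * M * P)ᵀ = Pᵀ * (M + Mᵀ) * P := by
  simp only [transpose_mul, transpose_transpose, Matrix.mul_add, Matrix.add_mul,
    Matrix.mul_assoc]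

theorem dotProduct_transpose_mul_mul_mulVec (M P : Matrix ι ι R) (ξ : ι → R) :
    ξ ⬝ᵥ (Pᵀ * M * P) *ᵥ ξ = (P *ᵥ ξ) ⬝ᵥ M *ᵥ (P *ᵥ ξ) := by
  rw [← mulVec_mulVec, ← mulVec_mulVec, dotProduct_mulVec, vecMul_transpose]

theorem dotProduct_add_transpose_mulVec (M : Matrix ι ι R) (ξ : ι → R) :
    ξ ⬝ᵥ (M + Mᵀ) *ᵥ ξ = 2 * (ξ ⬝ᵥ M *ᵥ ξ) := by
  rw [add_mulVec, dotProduct_add, dotProduct_mulVec ξ Mᵀ, vecMul_transpose, dotProduct_comm]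
  ring

variable [DecidableEq ι]

theorem eq_of_transpose_mul_mul_eq {P A B : Matrix ι ι R} (hP : IsUnit P.det)
    (h : Pᵀ * A * P = Pᵀ * B * P) : A = B :=
  ((isUnit_iff_isUnit_det _).2 (isUnit_det_transpose P hP)).mul_left_cancel
    (((isUnit_iff_isUnit_det P).2 hP).mul_right_cancel h)

theorem single_add_single_dotProduct_mulVec (S : Matrix ι ι R) (i j : ι) (a b : R) :
    (Pi.single i a + Pi.single j b) ⬝ᵥ S *ᵥ (Pi.single i a + Pi.single j b) =
      a * (S i i * a + S i j * b) + b * (S j i * a + S j j * b) := by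
  simp [mulVec_add, dotProduct_add, add_dotProduct, mulVec_single, single_dotProduct]
  ring

theorem single_add_single_add_single_dotProduct_mulVec (S : Matrix ι ι R) (i j k : ι)
    (a b c : R) :
    (Pi.single i a + Pi.single j b + Pi.single k c) ⬝ᵥ S *ᵥ
        (Pi.single i a + Pi.single j b + Pi.single k c) =
      a * (S i i * a + S i j * b + S i k * c) + b * (S j i * a + S j j * b + S j k * c) +
        c * (S k i * a + S k j * b + S k k * c) := by
  simp [mulVec_add, dotProduct_add, add_dotProduct, mulVec_single, single_dotProduct]
  ring

def lorentzDiag (t : ι) : Matrix ι ι ℝ := diagonal fun i => if i = t then -1 else 1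

section lorentzDiag

variable {t j k : ι}

theorem lorentzDiag_quad_single_add_single (hj : j ≠ t) (a b : ℝ) :
    (Pi.single t a + Pi.single j b) ⬝ᵥ lorentzDiag t *ᵥ (Pi.single t a + Pi.single j b) =
      -a ^ 2 + b ^ 2 := by
  rw [single_add_single_dotProduct_mulVec]
  simp [lorentzDiag, hj, hj.symm]
  ring

theorem lorentzDiag_quad_single_add_single_add_single (hj : j ≠ t) (hk : k ≠ t) (hjk : j ≠ k)
    (a b c : ℝ) :
    (Pi.single t a + Pi.single j b + Pi.single k c) ⬝ᵥ lorentzDiag t *ᵥ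
        (Pi.single t a + Pi.single j b + Pi.single k c) = -a ^ 2 + b ^ 2 + c ^ 2 := by
  rw [single_add_single_add_single_dotProduct_mulVec]
  simp [lorentzDiag, hj, hj.symm, hk, hk.symm, hjk, hjk.symm]
  ring

theorem eq_smul_lorentzDiag_of_isSymm_of_quad_eq_zero {S : Matrix ι ι ℝ} (hS : S.IsSymm)
    (hnull : ∀ ξ, ξ ⬝ᵥ lorentzDiag t *ᵥ ξ = 0 → ξ ⬝ᵥ S *ᵥ ξ = 0) :
    S = (-S t t) • lorentzDiag t := by
  have time_space {k : ι} (hk : k ≠ t) : S t k = 0 ∧ S k k = -S t t := by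
    have hplus := hnull (Pi.single t 1 + Pi.single k 1)
      (by rw [lorentzDiag_quad_single_add_single hk]; norm_num)
    have hminus := hnull (Pi.single t 1 + Pi.single k (-1))
      (by rw [lorentzDiag_quad_single_add_single hk]; norm_num)
    rw [single_add_single_dotProduct_mulVec, hS.apply t k] at hplus hminus
    constructor <;> linarith
  have space_space {j k : ι} (hj : j ≠ t) (hk : k ≠ t) (hjk : j ≠ k) : S j k = 0 := by
    have h := hnull (Pi.single t 5 + Pi.single j 3 + Pi.single k 4)
      (by rw [lorentzDiag_quad_single_add_single_add_single hj hk hjk]; norm_num)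
    rw [single_add_single_add_single_dotProduct_mulVec, hS.apply t j, hS.apply t k,
      hS.apply j k] at h
    linarith [time_space hj, time_space hk]
  ext i j
  by_cases hi : i = t <;> by_cases hj : j = t
  · subst hi hj; simp [lorentzDiag]
  · subst hi; simp [lorentzDiag, diagonal_apply_ne _ (Ne.symm hj), (time_space hj).1]
  · subst hj; simp [lorentzDiag, diagonal_apply_ne _ hi, hS.apply i j ▸ (time_space hi).1]
  · by_cases hij : i = j
    · subst hij; simp [lorentzDiag, hi, (time_space hi).2]
    · simp [lorentzDiag, diagonal_apply_ne _ hij, space_space hi hj hij]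

end lorentzDiag

end Matrix

/-- A bilinear form on ℝ⁴ vanishing on the null cone of a Lorentzian
metric g decomposes as c·g plus an antisymmetric form. -/
theorem null_form_decomposition (G W : Matrix (Fin 4) (Fin 4) ℝ)
    (hGsym : G.IsSymm)
    (hGsig : ∃ P : Matrix (Fin 4) (Fin 4) ℝ, IsUnit P.det ∧ Pᵀ * G * P = minkMat)
    (hnull : ∀ ξ : Fin 4 → ℝ, ξ ⬝ᵥ G *ᵥ ξ = 0 → ξ ⬝ᵥ W *ᵥ ξ = 0) :
    ∃ (c : ℝ) (A : Matrix (Fin 4) (Fin 4) ℝ), Aᵀ = -A ∧ W = c • G + A := by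
  obtain ⟨P, hPdet, hP⟩ := hGsig
  have hconj_null : ∀ ξ, ξ ⬝ᵥ lorentzDiag 0 *ᵥ ξ = 0 →
      ξ ⬝ᵥ (Pᵀ * W * P + (Pᵀ * W * P)ᵀ) *ᵥ ξ = 0 := by
    intro ξ hξ
    rw [show lorentzDiag 0 = minkMat from rfl, ← hP, dotProduct_transpose_mul_mul_mulVec] at hξ
    rw [dotProduct_add_transpose_mulVec, dotProduct_transpose_mul_mul_mulVec, hnull _ hξ,
      mul_zero]
  obtain ⟨c, hc⟩ : ∃ c : ℝ, Pᵀ * W * P + (Pᵀ * W * P)ᵀ = c • minkMat :=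
    ⟨_, eq_smul_lorentzDiag_of_isSymm_of_quad_eq_zero (isSymm_add_transpose_self _) hconj_null⟩
  have hsum : W + Wᵀ = c • G := eq_of_transpose_mul_mul_eq hPdet <| by
    rw [← transpose_mul_mul_add_transpose, hc, ← hP, Matrix.mul_smul, Matrix.smul_mul]
  exact ⟨c / 2, W - (c / 2) • G, transpose_sub_half_smul_eq_neg hGsym hsum, by abel⟩
end

section
/- Let g be a symmetric bilinear form on ℝ⁴, let ζ⁽¹⁾, ζ⁽²⁾, ζ⁽³⁾, ζ⁽⁴⁾ ∈ ℝ⁴ be null vectors such that ζ = ζ⁽¹⁾ + ζ⁽²⁾ + ζ⁽³⁾ + ζ⁽⁴⁾ is also null (g(ζ,ζ)=0), and assume that for each i, g(ζ − ζ⁽ⁱ⁾, ζ − ζ⁽ⁱ⁾) ≠ 0. Then the sum over all 24 permutations (i,j,k,l) of (1,2,3,4) of [ g(ζ⁽ⁱ⁾, ζ⁽ʲ⁾+ζ⁽ᵏ⁾+ζ⁽ˡ⁾) / g(ζ⁽ʲ⁾+ζ⁽ᵏ⁾+ζ⁽ˡ⁾, ζ⁽ʲ⁾+ζ⁽ᵏ⁾+ζ⁽ˡ⁾)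 ] · g(ζ⁽ᵏ⁾, ζ⁽ˡ⁾) equals 4·g(ζ, ζ), which is 0. -/
/-! Expanding g(ζ, ζ) = g(ζ⁽ⁱ⁾ + W, ζ⁽ⁱ⁾ + W) with W = ζ − ζ⁽ⁱ⁾ and using that ζ and ζ⁽ⁱ⁾ are null
gives 2 g(ζ⁽ⁱ⁾, W) = −g(W, W), so every ratio in the sum equals −1/2. What remains is −1/2 times the
sum of g(ζ⁽ᵏ⁾, ζ⁽ˡ⁾) over all permutations, in which every ordered pair k ≠ l occurs equally often;
the sum over those pairs is g(ζ, ζ) − Σᵢ g(ζ⁽ⁱ⁾, ζ⁽ⁱ⁾) = 0. -/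

open Finset Matrix

namespace Equiv.Perm

theorem exists_apply_eq_and_apply_eq {α : Type*} {a b i j : α} (hab : a ≠ b) (hij : i ≠ j) :
    ∃ τ : Perm α, τ a = i ∧ τ b = j := by
  have hinj : ∀ {x y : α}, x ≠ y → Function.Injective ![x, y] := fun hxy p q => by
    fin_cases p <;> fin_cases q <;> simp [hxy, hxy.symm]
  obtain ⟨τ, hτ⟩ := exists_extending_pair ![a, b] ![i, j] (hinj hab) (hinj hij)
  exact ⟨τ, hτ 0, hτ 1⟩

variable {α : Type*} [Fintype α] [DecidableEq α]

theorem card_filter_apply_eq_and_apply_eq {a b i j : α} (hab : a ≠ b) (hij : i ≠ j) :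
    #{σ : Perm α | σ a = i ∧ σ b = j} = #{σ : Perm α | σ a = a ∧ σ b = b} := by
  obtain ⟨τ, hτa, hτb⟩ := exists_apply_eq_and_apply_eq hab hij
  refine card_nbij' (τ⁻¹ * ·) (τ * ·) ?_ ?_ ?_ ?_ <;> intro σ hσ <;>
    simp_all [Equiv.symm_apply_eq]

theorem sum_apply_apply {M : Type*} [AddCommMonoid M] {a b : α} (hab : a ≠ b)
    (f : α → α → M) :
    ∑ σ : Perm α, f (σ a) (σ b) =
      #{σ : Perm α | σ a = a ∧ σ b = b} • ∑ p ∈ univ.offDiag, f p.1 p.2 := by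
  have hmaps : ∀ σ ∈ (univ : Finset (Perm α)), (σ a, σ b) ∈ univ.offDiag := fun σ _ => by
    simpa using σ.injective.ne hab
  rw [← sum_fiberwise_of_maps_to hmaps, smul_sum]
  refine sum_congr rfl fun p hp => ?_
  calc ∑ σ : Perm α with (σ a, σ b) = p, f (σ a) (σ b)
      = ∑ σ : Perm α with σ a = p.1 ∧ σ b = p.2, f p.1 p.2 := by
        refine sum_congr (by simp [Prod.ext_iff]) fun σ hσ => ?_
        rw [(mem_filter.mp hσ).2.1, (mem_filter.mp hσ).2.2]
    _ = _ := by rw [sum_const, card_filter_apply_eq_and_apply_eq hab (mem_offDiag.mp hp).2.2]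

end Equiv.Perm

namespace LinearMap.BilinForm

variable {R M : Type*} [CommRing R] [AddCommGroup M] [Module R M]

theorem sum_offDiag_add_sum_diag {ι : Type*} [Fintype ι] [DecidableEq ι]
    (B : LinearMap.BilinForm R M) (v : ι → M) :
    ∑ p ∈ univ.offDiag, B (v p.1) (v p.2) + ∑ i, B (v i) (v i) = B (∑ i, v i) (∑ i, v i) := by
  rw [sum_left]
  simp only [sum_right]
  rw [← sum_product' univ univ fun i j => B (v i) (v j), ← diag_union_offDiag,
    sum_union (disjoint_diag_offDiag _), sum_diag, add_comm]

theorem two_mul_apply_eq_neg {B : LinearMap.BilinForm R M} (hB : B.IsSymm) {x y : M}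
    (hx : B x x = 0) (hxy : B (x + y) (x + y) = 0) : 2 * B x y = -B y y := by
  have hyx := hB.eq x y
  simp only [map_add, LinearMap.add_apply, hx] at hxy
  linear_combination hxy + hyx

end LinearMap.BilinForm

/-- for four null vectors with null sum ζ and non-degenerate denominators,
Σ_{σ(4)} [g(ζ⁽ⁱ⁾, ζ⁽ʲ⁾+ζ⁽ᵏ⁾+ζ⁽ˡ⁾)/g(ζ⁽ʲ⁾+ζ⁽ᵏ⁾+ζ⁽ˡ⁾,·)]·g(ζ⁽ᵏ⁾,ζ⁽ˡ⁾) = 4·g(ζ,ζ) = 0. -/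
theorem first_term_A_vanishes (g : Matrix (Fin 4) (Fin 4) ℝ) (hg : g.IsSymm)
    (ζ : Fin 4 → (Fin 4 → ℝ)) (hnull : ∀ i, (ζ i) ⬝ᵥ g *ᵥ (ζ i) = 0)
    (hz : (∑ i, ζ i) ⬝ᵥ g *ᵥ (∑ i, ζ i) = 0)
    (hden : ∀ i, ((∑ m, ζ m) - ζ i) ⬝ᵥ g *ᵥ ((∑ m, ζ m) - ζ i) ≠ 0) :
    (∑ σ : Equiv.Perm (Fin 4),
      ((ζ (σ 0)) ⬝ᵥ g *ᵥ (ζ (σ 1) + ζ (σ 2) + ζ (σ 3)) /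
        ((ζ (σ 1) + ζ (σ 2) + ζ (σ 3)) ⬝ᵥ g *ᵥ (ζ (σ 1) + ζ (σ 2) + ζ (σ 3)))) *
        ((ζ (σ 2)) ⬝ᵥ g *ᵥ (ζ (σ 3)))) = 4 * ((∑ i, ζ i) ⬝ᵥ g *ᵥ (∑ i, ζ i)) ∧
    (∑ σ : Equiv.Perm (Fin 4),
      ((ζ (σ 0)) ⬝ᵥ g *ᵥ (ζ (σ 1) + ζ (σ 2) + ζ (σ 3)) /
        ((ζ (σ 1) + ζ (σ 2) + ζ (σ 3)) ⬝ᵥ g *ᵥ (ζ (σ 1) + ζ (σ 2) + ζ (σ 3)))) *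
        ((ζ (σ 2)) ⬝ᵥ g *ᵥ (ζ (σ 3)))) = 0 := by
  set B := Matrix.toBilin' g
  have hB : B.IsSymm := Matrix.isSymm_toBilin'_iff_isSymm.mpr hg
  simp only [← Matrix.toBilin'_apply'] at hnull hz hden ⊢
  have hterm (σ : Equiv.Perm (Fin 4)) :
      B (ζ (σ 0)) (ζ (σ 1) + ζ (σ 2) + ζ (σ 3)) /
        B (ζ (σ 1) + ζ (σ 2) + ζ (σ 3)) (ζ (σ 1) + ζ (σ 2) + ζ (σ 3)) = -1 / 2 := by
    have hrest : ζ (σ 1) + ζ (σ 2) + ζ (σ 3) = ∑ m, ζ m - ζ (σ 0) := by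
      rw [eq_sub_iff_add_eq, ← Equiv.sum_comp σ ζ, Fin.sum_univ_four]
      abel
    have h2 := B.two_mul_apply_eq_neg hB (hnull (σ 0)) (y := ∑ m, ζ m - ζ (σ 0))
      (by rwa [add_sub_cancel])
    rw [hrest, div_eq_iff (hden (σ 0))]
    linear_combination h2 / 2
  have hpairs : ∑ σ : Equiv.Perm (Fin 4), B (ζ (σ 2)) (ζ (σ 3)) = 0 := by
    have hoff := B.sum_offDiag_add_sum_diag ζ
    rw [hz, sum_eq_zero fun i _ => hnull i, add_zero] at hoff
    rw [Equiv.Perm.sum_apply_apply (by decide) fun i j => B (ζ i) (ζ j), hoff, smul_zero]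
  have hzero : ∑ σ : Equiv.Perm (Fin 4),
      B (ζ (σ 0)) (ζ (σ 1) + ζ (σ 2) + ζ (σ 3)) /
        B (ζ (σ 1) + ζ (σ 2) + ζ (σ 3)) (ζ (σ 1) + ζ (σ 2) + ζ (σ 3)) *
        B (ζ (σ 2)) (ζ (σ 3)) = 0 := by
    simp only [hterm, ← mul_sum, hpairs, mul_zero]
  exact ⟨by rw [hzero, hz, mul_zero], hzero⟩
end

section
/- Let g be a symmetric bilinear form on ℝ⁴, let ζ⁽¹⁾, ζ⁽²⁾, ζ⁽³⁾, ζ⁽⁴⁾ ∈ ℝ⁴ be null vectors with ζ = ζ⁽¹⁾ + ζ⁽²⁾ + ζ⁽³⁾ + ζ⁽⁴⁾ also null, and assume g(ζ − ζ⁽ⁱ⁾, ζ − ζ⁽ⁱ⁾) ≠ 0 for each i and g(ζ⁽ⁱ⁾ + ζ⁽ʲ⁾, ζ⁽ⁱ⁾ + ζ⁽ʲ⁾) ≠ 0 for each i ≠ j. Then the quantity 𝒜 = Σ_{(i,j,k,l)∈σ(4)} [ 2·g(ζ⁽ⁱ⁾, ζ⁽ʲ⁾+ζ⁽ᵏ⁾+ζ⁽ˡ⁾)·g(ζ⁽ᵏ⁾,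 ζ⁽ˡ⁾) / g(ζ⁽ʲ⁾+ζ⁽ᵏ⁾+ζ⁽ˡ⁾, ζ⁽ʲ⁾+ζ⁽ᵏ⁾+ζ⁽ˡ⁾) + g(ζ⁽ⁱ⁾, ζ⁽ʲ⁾)·g(ζ⁽ᵏ⁾, ζ⁽ˡ⁾) / g(ζ⁽ⁱ⁾+ζ⁽ʲ⁾, ζ⁽ⁱ⁾+ζ⁽ʲ⁾) + 2·g(ζ⁽ᵏ⁾, ζ⁽ˡ⁾)·g(ζ⁽ʲ⁾, ζ⁽ᵏ⁾+ζ⁽ˡ⁾) / g(ζ⁽ᵏ⁾+ζ⁽ˡ⁾, ζ⁽ᵏ⁾+ζ⁽ˡ⁾) ] equals 0. -/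
/-!
Write `b i j = g(ζ⁽ⁱ⁾, ζ⁽ʲ⁾)`. As the `ζ⁽ⁱ⁾` are null, every two-vector denominator is `2 b i j`,
and nullity of `ζ = ζ⁽ⁱ⁾ + (ζ - ζ⁽ⁱ⁾)` gives `2 g(ζ⁽ⁱ⁾, ζ - ζ⁽ⁱ⁾) = -g(ζ - ζ⁽ⁱ⁾, ζ - ζ⁽ⁱ⁾)`.
Hence each summand collapses to the polynomial `-b k l / 2 + b j k + b j l`. Summed over all
permutations, each of these pairings yields the same multiple of `∑_{i ≠ j} b i j = g(ζ, ζ) = 0`.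
-/

open Finset Matrix

namespace LinearMap.BilinForm

variable {V : Type*} [AddCommGroup V]

theorem IsSymm.apply_add_self {R : Type*} [CommRing R] [Module R V]
    {B : LinearMap.BilinForm R V} (hB : B.IsSymm) (x y : V) :
    B (x + y) (x + y) = B x x + 2 * B x y + B y y := by
  simp only [map_add, LinearMap.add_apply, hB.eq y x]
  ring

theorem apply_sum_self_of_isotropic {R ι : Type*} [CommRing R] [Module R V] [DecidableEq ι]
    (B : LinearMap.BilinForm R V) (s : Finset ι) (v : ι → V) (hv : ∀ i ∈ s, B (v i) (v i) = 0) :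
    B (∑ i ∈ s, v i) (∑ i ∈ s, v i) = ∑ p ∈ s.offDiag, B (v p.1) (v p.2) := by
  have hdiag : ∑ p ∈ s.diag, B (v p.1) (v p.2) = 0 :=
    sum_eq_zero fun p hp => by
      obtain ⟨hp, hpp⟩ := mem_diag.1 hp
      rw [← hpp]
      exact hv _ hp
  simp only [map_sum, LinearMap.sum_apply]
  rw [sum_comm, ← sum_product' s s (fun i j => B (v i) (v j)), ← diag_union_offDiag,
    sum_union (disjoint_diag_offDiag s), hdiag, zero_add]

theorem IsSymm.cubic_symbol_term_eq {K : Type*} [Field K] [Module K V]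
    {B : LinearMap.BilinForm K V} (hB : B.IsSymm) {w x y z : V} (hw : B w w = 0)
    (hx : B x x = 0) (hy : B y y = 0) (hz : B z z = 0)
    (hsum : B (w + (x + y + z)) (w + (x + y + z)) = 0)
    (h3 : B (x + y + z) (x + y + z) ≠ 0) (hwx : B (w + x) (w + x) ≠ 0)
    (hyz : B (y + z) (y + z) ≠ 0) :
    2 * B w (x + y + z) * B y z / B (x + y + z) (x + y + z)
        + B w x * B y z / B (w + x) (w + x)
        + 2 * B y z * B x (y + z) / B (y + z) (y + z)
      = -(B y z / 2) + B x y + B x z := by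
  have hw_rest : 2 * B w (x + y + z) = -B (x + y + z) (x + y + z) := by
    linear_combination hsum - hB.apply_add_self w (x + y + z) - hw
  have hwx_eq : B (w + x) (w + x) = 2 * B w x := by
    linear_combination hB.apply_add_self w x + hw + hx
  have hyz_eq : B (y + z) (y + z) = 2 * B y z := by
    linear_combination hB.apply_add_self y z + hy + hz
  have hwx' : B w x ≠ 0 := right_ne_zero_of_mul (hwx_eq ▸ hwx)
  have hyz' : B y z ≠ 0 := right_ne_zero_of_mul (hyz_eq ▸ hyz)
  have h2 : (2 : K) ≠ 0 := left_ne_zero_of_mul (hyz_eq ▸ hyz)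
  rw [hw_rest, hwx_eq, hyz_eq, map_add (B x) y z]
  field_simp
  ring

end LinearMap.BilinForm

theorem Equiv.Perm.sum_apply_pair_eq {α M : Type*} [Fintype α] [DecidableEq α]
    [AddCommMonoid M] (F : α → α → M) {a b c d : α} (hab : a ≠ b) (hcd : c ≠ d) :
    ∑ σ : Equiv.Perm α, F (σ a) (σ b) = ∑ σ : Equiv.Perm α, F (σ c) (σ d) := by
  obtain ⟨τ, hτ⟩ := Equiv.Perm.exists_extending_pair ![c, d] ![a, b]
    (by simp [Function.Injective, Fin.forall_fin_two, hcd, hcd.symm])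
    (by simp [Function.Injective, Fin.forall_fin_two, hab, hab.symm])
  have hc : τ c = a := hτ 0
  have hd : τ d = b := hτ 1
  calc ∑ σ : Equiv.Perm α, F (σ a) (σ b)
      = ∑ σ : Equiv.Perm α, F ((σ * τ) c) ((σ * τ) d) := by
        simp only [Equiv.Perm.mul_apply, hc, hd]
    _ = ∑ σ : Equiv.Perm α, F (σ c) (σ d) :=
        Equiv.sum_comp (Equiv.mulRight τ) fun σ => F (σ c) (σ d)

theorem Equiv.Perm.sum_apply_pair_eq_zero {α M : Type*} [Fintype α] [DecidableEq α]
    [AddCommMonoid M] [IsAddTorsionFree M] (F : α → α → M)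
    (hF : ∑ p ∈ univ.offDiag, F p.1 p.2 = 0) {a b : α} (hab : a ≠ b) :
    ∑ σ : Equiv.Perm α, F (σ a) (σ b) = 0 := by
  have hcard : #(univ.offDiag : Finset (α × α)) ≠ 0 :=
    card_ne_zero_of_mem (a := (a, b)) (by simpa using hab)
  have hσ (σ : Equiv.Perm α) : ∑ p ∈ univ.offDiag, F (σ p.1) (σ p.2) = 0 := by
    rw [← hF]
    exact sum_equiv (σ.prodCongr σ) (by simp) (by simp)
  refine nsmul_right_injective hcard ?_
  calc #(univ.offDiag) • ∑ σ : Equiv.Perm α, F (σ a) (σ b)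
      = ∑ p ∈ univ.offDiag, ∑ σ : Equiv.Perm α, F (σ p.1) (σ p.2) := by
        rw [← sum_const]
        exact sum_congr rfl fun p hp =>
          (Equiv.Perm.sum_apply_pair_eq F (mem_offDiag.1 hp).2.2 hab).symm
    _ = #(univ.offDiag) • 0 := by rw [sum_comm, smul_zero]; simp [hσ]

/-- vanishing of the principal symbol 𝒜 of the cubic interaction term 𝓜₂. -/
theorem symbol_A_vanishes (g : Matrix (Fin 4) (Fin 4) ℝ) (hg : g.IsSymm)
    (ζ : Fin 4 → (Fin 4 → ℝ)) (hnull : ∀ i, (ζ i) ⬝ᵥ g *ᵥ (ζ i) = 0)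
    (hz : (∑ i, ζ i) ⬝ᵥ g *ᵥ (∑ i, ζ i) = 0)
    (hden3 : ∀ i, ((∑ m, ζ m) - ζ i) ⬝ᵥ g *ᵥ ((∑ m, ζ m) - ζ i) ≠ 0)
    (hden2 : ∀ i j, i ≠ j → (ζ i + ζ j) ⬝ᵥ g *ᵥ (ζ i + ζ j) ≠ 0) :
    ∑ σ : Equiv.Perm (Fin 4),
      (2 * ((ζ (σ 0)) ⬝ᵥ g *ᵥ (ζ (σ 1) + ζ (σ 2) + ζ (σ 3))) *
          ((ζ (σ 2)) ⬝ᵥ g *ᵥ (ζ (σ 3))) /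
          ((ζ (σ 1) + ζ (σ 2) + ζ (σ 3)) ⬝ᵥ g *ᵥ (ζ (σ 1) + ζ (σ 2) + ζ (σ 3)))
        + ((ζ (σ 0)) ⬝ᵥ g *ᵥ (ζ (σ 1))) * ((ζ (σ 2)) ⬝ᵥ g *ᵥ (ζ (σ 3))) /
          ((ζ (σ 0) + ζ (σ 1)) ⬝ᵥ g *ᵥ (ζ (σ 0) + ζ (σ 1)))
        + 2 * ((ζ (σ 2)) ⬝ᵥ g *ᵥ (ζ (σ 3))) *
          ((ζ (σ 1)) ⬝ᵥ g *ᵥ (ζ (σ 2) + ζ (σ 3))) /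
          ((ζ (σ 2) + ζ (σ 3)) ⬝ᵥ g *ᵥ (ζ (σ 2) + ζ (σ 3)))) = 0 := by
  simp only [← Matrix.toBilin'_apply'] at hnull hz hden3 hden2 ⊢
  set B := Matrix.toBilin' g
  have hB : B.IsSymm := Matrix.isSymm_toBilin'_iff_isSymm.2 hg
  have hpair {a b : Fin 4} (hab : a ≠ b) : ∑ σ : Equiv.Perm (Fin 4), B (ζ (σ a)) (ζ (σ b)) = 0 :=
    Equiv.Perm.sum_apply_pair_eq_zero (fun i j => B (ζ i) (ζ j))
      (by rw [← B.apply_sum_self_of_isotropic]; exacts [hz, fun i _ => hnull i]) hab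
  have hsplit (σ : Equiv.Perm (Fin 4)) : ∑ m, ζ m = ζ (σ 0) + (ζ (σ 1) + ζ (σ 2) + ζ (σ 3)) := by
    rw [← Equiv.sum_comp σ ζ, Fin.sum_univ_four, add_assoc, add_assoc, add_assoc]
  rw [sum_congr rfl fun σ _ => hB.cubic_symbol_term_eq (hnull _) (hnull _) (hnull _) (hnull _)
    (hsplit σ ▸ hz) (by simpa [hsplit σ] using hden3 (σ 0))
    (hden2 _ _ (σ.injective.ne (by decide))) (hden2 _ _ (σ.injective.ne (by decide)))]
  simp only [sum_add_distrib, sum_neg_distrib, ← sum_div, hpair (by decide : (2 : Fin 4) ≠ 3),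
    hpair (by decide : (1 : Fin 4) ≠ 2), hpair (by decide : (1 : Fin 4) ≠ 3)]
  norm_num
end

section
/- Let g be a symmetric bilinear form on ℝ⁴, let ζ⁽¹⁾, ζ⁽²⁾, ζ⁽³⁾, ζ⁽⁴⁾ ∈ ℝ⁴ be null vectors with ζ = ζ⁽¹⁾ + ζ⁽²⁾ + ζ⁽³⁾ + ζ⁽⁴⁾ also null, and assume g(ζ − ζ⁽ⁱ⁾, ζ − ζ⁽ⁱ⁾) ≠ 0 for each i and g(ζ⁽ⁱ⁾+ζ⁽ʲ⁾, ζ⁽ⁱ⁾+ζ⁽ʲ⁾) ≠ 0 for i ≠ j. Then ℬ = Σ_{(i,j,k,l)∈σ(4)} [ 2·g(ζ⁽ⁱ⁾, ζ⁽ʲ⁾+ζ⁽ᵏ⁾+ζ⁽ˡ⁾)·g(ζ⁽ʲ⁾, ζ⁽ᵏ⁾+ζ⁽ˡ⁾) / g(ζ⁽ʲ⁾+ζ⁽ᵏ⁾+ζ⁽ˡ⁾, ζ⁽ʲ⁾+ζ⁽ᵏ⁾+ζ⁽ˡ⁾) + (1/4)·g(ζ⁽ᵏ⁾+ζ⁽ˡ⁾,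 ζ⁽ⁱ⁾+ζ⁽ʲ⁾) ] equals 0. -/
open Matrix

/-!
Write `B` for the bilinear form of `g` and `Z = ∑ ζ⁽ⁱ⁾`. Since `ζ⁽ⁱ⁾` and `Z` are null,
`B(Z - ζ⁽ⁱ⁾, Z - ζ⁽ⁱ⁾) = -2 B(ζ⁽ⁱ⁾, Z - ζ⁽ⁱ⁾)`, so every fraction collapses and `ℬ` becomes a
linear combination of the sums `∑_σ B(ζ^(σ a), ζ^(σ b))` with `a ≠ b`. As `Perm (Fin 4)` acts
doubly transitively, these sums all agree; adding them up over all pairs `a ≠ b` and reindexing by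
`σ` gives `4! · ∑_{a ≠ b} B(ζ⁽ᵃ⁾, ζ⁽ᵇ⁾) = 4! · (B(Z, Z) - ∑ B(ζ⁽ᵃ⁾, ζ⁽ᵃ⁾)) = 0`.
-/

open Finset

section PermSums

variable {α M : Type*} [Fintype α] [AddCommMonoid M]

theorem Finset.sum_offDiag_perm (f : α → α → M) (σ : Equiv.Perm α) :
    ∑ p ∈ univ.offDiag, f (σ p.1) (σ p.2) = ∑ p ∈ univ.offDiag, f p.1 p.2 := by
  refine sum_nbij' (fun p ↦ (σ p.1, σ p.2)) (fun p ↦ (σ⁻¹ p.1, σ⁻¹ p.2)) ?_ ?_ ?_ ?_ ?_ <;>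
    simp

variable [DecidableEq α]

theorem Equiv.Perm.sum_apply_apply_eq (f : α → α → M) {i j k l : α} (hij : i ≠ j)
    (hkl : k ≠ l) :
    ∑ σ : Equiv.Perm α, f (σ i) (σ j) = ∑ σ : Equiv.Perm α, f (σ k) (σ l) := by
  obtain ⟨τ, hτk, hτl⟩ :=
    MulAction.is_two_pretransitive_iff.mp (Equiv.Perm.isMultiplyPretransitive α 2) hij hkl
  rw [Equiv.Perm.smul_def] at hτk hτl
  exact (Fintype.sum_equiv (Equiv.mulRight τ) _ _ fun σ ↦ by simp [hτk, hτl]).symm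

theorem Equiv.Perm.sum_apply_apply_eq_zero [IsAddTorsionFree M] (f : α → α → M) {i j : α}
    (hij : i ≠ j) (hf : ∑ p ∈ univ.offDiag, f p.1 p.2 = 0) :
    ∑ σ : Equiv.Perm α, f (σ i) (σ j) = 0 := by
  have hcard : #(univ.offDiag : Finset (α × α)) ≠ 0 :=
    card_ne_zero.mpr ⟨(i, j), by simpa using hij⟩
  have key : #(univ.offDiag : Finset (α × α)) • ∑ σ : Equiv.Perm α, f (σ i) (σ j) = 0 := calc
    _ = ∑ p ∈ univ.offDiag, ∑ σ : Equiv.Perm α, f (σ p.1) (σ p.2) := by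
      rw [← sum_const]
      exact sum_congr rfl fun p hp ↦ sum_apply_apply_eq f hij (by simpa using hp)
    _ = 0 := by
      rw [sum_comm]
      simp [Finset.sum_offDiag_perm, hf]
  exact (nsmul_eq_zero_iff_right hcard).mp key

end PermSums

theorem Fin.add_sum_perm_four {M : Type*} [AddCommMonoid M] (f : Fin 4 → M)
    (σ : Equiv.Perm (Fin 4)) : f (σ 0) + (f (σ 1) + f (σ 2) + f (σ 3)) = ∑ i, f i := by
  rw [← Equiv.sum_comp σ, Fin.sum_univ_four, add_assoc, add_assoc, add_assoc]

theorem LinearMap.sum_offDiag_apply_eq_zero {R M N ι : Type*} [CommSemiring R]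
    [AddCommMonoid M] [AddCommMonoid N] [Module R M] [Module R N] [Fintype ι] [DecidableEq ι]
    (B : M →ₗ[R] M →ₗ[R] N) (v : ι → M) (hv : ∀ i, B (v i) (v i) = 0)
    (hsum : B (∑ i, v i) (∑ i, v i) = 0) :
    ∑ p ∈ univ.offDiag, B (v p.1) (v p.2) = 0 := by
  simp only [map_sum, LinearMap.sum_apply] at hsum
  rwa [sum_comm, ← sum_product', ← diag_union_offDiag,
    sum_union (disjoint_diag_offDiag _), sum_diag, sum_congr rfl fun i _ ↦ hv i, sum_const_zero,
    zero_add] at hsum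

namespace LinearMap.BilinForm.IsSymm

variable {M : Type*} [AddCommGroup M]

theorem apply_self_eq_neg_two_mul {R : Type*} [CommRing R] [Module R M]
    {B : LinearMap.BilinForm R M} (hB : B.IsSymm) {x w : M} (hx : B x x = 0)
    (hxw : B (x + w) (x + w) = 0) : B w w = -(2 * B x w) := by
  simp only [map_add, LinearMap.add_apply] at hxw
  linear_combination hxw - hx - hB.eq w x

theorem two_mul_mul_div_apply_self_eq_neg {K : Type*} [Field K] [Module K M]
    {B : LinearMap.BilinForm K M} (hB : B.IsSymm) {x w : M} (hx : B x x = 0)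
    (hxw : B (x + w) (x + w) = 0) (hw : B w w ≠ 0) (t : K) :
    2 * B x w * t / B w w = -t := by
  rw [hB.apply_self_eq_neg_two_mul hx hxw, neg_ne_zero] at hw
  rw [hB.apply_self_eq_neg_two_mul hx hxw, div_neg, mul_div_cancel_left₀ t hw]

end LinearMap.BilinForm.IsSymm

theorem symbol_B_vanishes_general (g : Matrix (Fin 4) (Fin 4) ℝ) (hg : g.IsSymm)
    (ζ : Fin 4 → (Fin 4 → ℝ)) (hnull : ∀ i, (ζ i) ⬝ᵥ g *ᵥ (ζ i) = 0)
    (hz : (∑ i, ζ i) ⬝ᵥ g *ᵥ (∑ i, ζ i) = 0)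
    (hden3 : ∀ i, ((∑ m, ζ m) - ζ i) ⬝ᵥ g *ᵥ ((∑ m, ζ m) - ζ i) ≠ 0) :
    ∑ σ : Equiv.Perm (Fin 4),
      (2 * ((ζ (σ 0)) ⬝ᵥ g *ᵥ (ζ (σ 1) + ζ (σ 2) + ζ (σ 3))) *
          ((ζ (σ 1)) ⬝ᵥ g *ᵥ (ζ (σ 2) + ζ (σ 3))) /
          ((ζ (σ 1) + ζ (σ 2) + ζ (σ 3)) ⬝ᵥ g *ᵥ (ζ (σ 1) + ζ (σ 2) + ζ (σ 3)))
        + (1 / 4) * ((ζ (σ 2) + ζ (σ 3)) ⬝ᵥ g *ᵥ (ζ (σ 0) + ζ (σ 1)))) = 0 := by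
  simp only [← Matrix.toBilin'_apply'] at hnull hz hden3 ⊢
  set B := Matrix.toBilin' g
  have hB : B.IsSymm := Matrix.isSymm_toBilin'_iff_isSymm.mpr hg
  have hpair : ∀ a b : Fin 4, a ≠ b → ∑ σ : Equiv.Perm (Fin 4), B (ζ (σ a)) (ζ (σ b)) = 0 :=
    fun a b hab ↦ Equiv.Perm.sum_apply_apply_eq_zero (fun a b ↦ B (ζ a) (ζ b)) hab
      (B.sum_offDiag_apply_eq_zero ζ hnull hz)
  have hcollapse : ∀ σ : Equiv.Perm (Fin 4),
      2 * B (ζ (σ 0)) (ζ (σ 1) + ζ (σ 2) + ζ (σ 3)) * B (ζ (σ 1)) (ζ (σ 2) + ζ (σ 3)) /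
          B (ζ (σ 1) + ζ (σ 2) + ζ (σ 3)) (ζ (σ 1) + ζ (σ 2) + ζ (σ 3)) =
        -B (ζ (σ 1)) (ζ (σ 2) + ζ (σ 3)) := by
    intro σ
    have hsum := Fin.add_sum_perm_four ζ σ
    refine hB.two_mul_mul_div_apply_self_eq_neg (hnull _) (hsum ▸ hz) ?_ _
    simpa [← hsum] using hden3 (σ 0)
  simp only [hcollapse]
  simp only [map_add, LinearMap.add_apply, sum_add_distrib, sum_neg_distrib, mul_add, ← mul_sum]
  simp [hpair]

/-- vanishing of the principal symbol ℬ of the interaction term 𝓜₃. -/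
theorem symbol_B_vanishes (g : Matrix (Fin 4) (Fin 4) ℝ) (hg : g.IsSymm)
    (ζ : Fin 4 → (Fin 4 → ℝ)) (hnull : ∀ i, (ζ i) ⬝ᵥ g *ᵥ (ζ i) = 0)
    (hz : (∑ i, ζ i) ⬝ᵥ g *ᵥ (∑ i, ζ i) = 0)
    (hden3 : ∀ i, ((∑ m, ζ m) - ζ i) ⬝ᵥ g *ᵥ ((∑ m, ζ m) - ζ i) ≠ 0)
    (hden2 : ∀ i j, i ≠ j → (ζ i + ζ j) ⬝ᵥ g *ᵥ (ζ i + ζ j) ≠ 0) :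
    ∑ σ : Equiv.Perm (Fin 4),
      (2 * ((ζ (σ 0)) ⬝ᵥ g *ᵥ (ζ (σ 1) + ζ (σ 2) + ζ (σ 3))) *
          ((ζ (σ 1)) ⬝ᵥ g *ᵥ (ζ (σ 2) + ζ (σ 3))) /
          ((ζ (σ 1) + ζ (σ 2) + ζ (σ 3)) ⬝ᵥ g *ᵥ (ζ (σ 1) + ζ (σ 2) + ζ (σ 3)))
        + (1 / 4) * ((ζ (σ 2) + ζ (σ 3)) ⬝ᵥ g *ᵥ (ζ (σ 0) + ζ (σ 1)))) = 0 :=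
  symbol_B_vanishes_general g hg ζ hnull hz hden3
end
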